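/- For every natural number n ≥ 1, the Gaussian third-order Jacobsthal numbers satisfy Jg(n)² - Jg(n-1)·Jg(n+1) = (1/7)·[ -i + (1 + i/2)·2^n·((2-3i)·Ω(n) - (1+2i)·Ω(n+1)) ]. -/

import Mathlib

/-!
The characteristic polynomial of the recurrence is `x³ - x² - x - 2 = (x - 2)(x² + x + 1)`, so
`Jg n = ((2 + i) 2ⁿ + (1 - 3i) Ω(n) - (2 + i) Ω(n + 1)) / 7`: the sequences `Ω(n)` and `Ω(n + 1)`
span the solutions of `u (n + 2) + u (n + 1) + u n = 0`. Substituting this closed form, the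
Cassini expression reduces to an identity in `2ⁿ`, `Ω(n)`, `Ω(n + 1)`, using only
`Ω(n + 2) = -Ω(n) - Ω(n + 1)` and `Ω(n)² + Ω(n) Ω(n + 1) + Ω(n + 1)² = 1`.
-/

/-- Ω(n) = 0, 1, -1 according as n ≡ 0, 1, 2 (mod 3). -/
def Omg (n : ℕ) : ℤ := if n % 3 = 0 then 0 else if n % 3 = 1 then 1 else -1

open Complex

theorem Omg_add_three (n : ℕ) : Omg (n + 3) = Omg n := by
  simp only [Omg, Nat.add_mod_right]

theorem Omg_add_two (n : ℕ) : Omg (n + 2) = -Omg n - Omg (n + 1) := by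
  simp only [Omg]
  split_ifs <;> omega

theorem Omg_sq_add_mul_add_sq (n : ℕ) :
    Omg n ^ 2 + Omg n * Omg (n + 1) + Omg (n + 1) ^ 2 = 1 := by
  simp only [Omg]
  split_ifs <;> omega

def thirdOrderJacobsthalRec (R : Type*) [CommSemiring R] : LinearRecurrence R :=
  ⟨3, ![2, 1, 1]⟩

theorem thirdOrderJacobsthalRec_isSolution_iff {R : Type*} [CommSemiring R] (u : ℕ → R) :
    (thirdOrderJacobsthalRec R).IsSolution u ↔
      ∀ n, u (n + 3) = u (n + 2) + u (n + 1) + 2 * u n := by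
  refine forall_congr' fun n => ?_
  change u (n + 3) = ∑ i : Fin 3, ![2, 1, 1] i * u (n + i) ↔ _
  simp only [Fin.sum_univ_three, Matrix.cons_val, Fin.val_zero, Fin.val_one, Fin.val_two,
    add_zero, one_mul]
  rw [show 2 * u n + u (n + 1) + u (n + 2) = u (n + 2) + u (n + 1) + 2 * u n by ring]

noncomputable def gaussianJacobsthal3 (n : ℕ) : ℂ :=
  ((2 + I) * 2 ^ n + (1 - 3 * I) * Omg n - (2 + I) * Omg (n + 1)) / 7

theorem gaussianJacobsthal3_add_three (n : ℕ) :
    gaussianJacobsthal3 (n + 3) =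
      gaussianJacobsthal3 (n + 2) + gaussianJacobsthal3 (n + 1) + 2 * gaussianJacobsthal3 n := by
  have h2 : (Omg (n + 2) : ℂ) = -Omg n - Omg (n + 1) := by exact_mod_cast Omg_add_two n
  have h3 : (Omg (n + 3) : ℂ) = -Omg (n + 1) - Omg (n + 2) := by
    exact_mod_cast Omg_add_two (n + 1)
  have h4 : (Omg (n + 4) : ℂ) = Omg (n + 1) := by exact_mod_cast Omg_add_three (n + 1)
  simp only [gaussianJacobsthal3, h4, h3, h2]
  ring

theorem eq_gaussianJacobsthal3 (Jg : ℕ → ℂ) (h0 : Jg 0 = 0) (h1 : Jg 1 = 1) (h2 : Jg 2 = 1 + I)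
    (hrec : ∀ n, Jg (n + 3) = Jg (n + 2) + Jg (n + 1) + 2 * Jg n) :
    Jg = gaussianJacobsthal3 := by
  rw [(thirdOrderJacobsthalRec ℂ).eq_iff_eqOn_range_order _ _
    ((thirdOrderJacobsthalRec_isSolution_iff _).2 hrec)
    ((thirdOrderJacobsthalRec_isSolution_iff _).2 gaussianJacobsthal3_add_three)]
  intro k hk
  have hk : k < 3 := Finset.mem_range.1 hk
  interval_cases k <;> norm_num [gaussianJacobsthal3, Omg, h0, h1, h2] <;> ring

theorem gaussianJacobsthal3_cassini (n : ℕ) :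
    gaussianJacobsthal3 (n + 1) ^ 2 - gaussianJacobsthal3 n * gaussianJacobsthal3 (n + 2) =
      (1 / 7 : ℂ) *
        (-I + (1 + I / 2) * 2 ^ (n + 1) *
          ((2 - 3 * I) * (Omg (n + 1) : ℂ) - (1 + 2 * I) * (Omg (n + 2) : ℂ))) := by
  have h2 : (Omg (n + 2) : ℂ) = -Omg n - Omg (n + 1) := by exact_mod_cast Omg_add_two n
  have h3 : (Omg (n + 3) : ℂ) = Omg n := by exact_mod_cast Omg_add_three n
  have hsq : (Omg n : ℂ) ^ 2 + Omg n * Omg (n + 1) + Omg (n + 1) ^ 2 = 1 := by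
    exact_mod_cast Omg_sq_add_mul_add_sq n
  simp only [gaussianJacobsthal3, h3, h2]
  linear_combination (-I / 7) * hsq +
    ((Omg n : ℂ) ^ 2 + Omg n * Omg (n + 1) + Omg (n + 1) ^ 2) / 7 * I_sq

theorem cassini_gaussian_third_order_jacobsthal
    (Jg : ℕ → ℂ)
    (h0 : Jg 0 = 0)
    (h1 : Jg 1 = 1)
    (h2 : Jg 2 = 1 + Complex.I)
    (hrec : ∀ n : ℕ, Jg (n + 3) = Jg (n + 2) + Jg (n + 1) + 2 * Jg n) :
    ∀ n : ℕ, 1 ≤ n →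
      Jg n ^ 2 - Jg (n - 1) * Jg (n + 1) =
        (1 / 7 : ℂ) *
          (-Complex.I + (1 + Complex.I / 2) * 2 ^ n *
            ((2 - 3 * Complex.I) * (Omg n : ℂ) - (1 + 2 * Complex.I) * (Omg (n + 1) : ℂ))) := by
  intro n hn
  obtain ⟨m, rfl⟩ := Nat.exists_eq_add_of_le' hn
  rw [eq_gaussianJacobsthal3 Jg h0 h1 h2 hrec, Nat.add_sub_cancel]
  exact gaussianJacobsthal3_cassini m
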